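/- arXiv:1606.06929 — 5 statements merged into one kernel-verified Lean document; each statement's English description precedes it below -/
import Mathlib

section
/- Let m be a nonnegative integer and let C and D be sets of nonnegative integers such that C ∪ D = [0, m], C ∩ D = ∅, and 0 ∈ C. Then R_C(n) = R_D(n) for every positive integer n if and only if there exists a natural number l such that m = 2^l − 1, C = A_l, and D = B_l. -/
/-- `R S n` is the number of unordered representations of `n` as `s + s'`
with `s, s' ∈ S` and `s < s'`. -/
noncomputable def R (S : Set ℕ) (n : ℕ) : ℕ :=
  {p : ℕ × ℕ | p.1 ∈ S ∧ p.2 ∈ S ∧ p.1 < p.2 ∧ p.1 + p.2 = n}.ncard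

/-- The Thue–Morse set: nonnegative integers with an even number of
`1` digits in binary. -/
def A : Set ℕ := {n | Even ((Nat.digits 2 n).sum)}

/-- The complement of the Thue–Morse set. -/
def B : Set ℕ := Aᶜ

/-- `Af l = A ∩ [0, 2^l − 1]`. -/
def Af (l : ℕ) : Set ℕ := A ∩ Set.Iic (2 ^ l - 1)

/-- `Bf l = B ∩ [0, 2^l − 1]`. -/
def Bf (l : ℕ) : Set ℕ := B ∩ Set.Iic (2 ^ l - 1)

/-! ### The Thue–Morse sign sequence -/

def tm (n : ℕ) : ℤ := if Even ((Nat.digits 2 n).sum) then 1 else -1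

lemma tm_zero : tm 0 = 1 := by simp [tm]

lemma digits_sum_two_mul (j : ℕ) :
    ((Nat.digits 2 (2 * j)).sum) = (Nat.digits 2 j).sum := by
  rcases Nat.eq_zero_or_pos j with h | h
  · simp [h]
  · rw [Nat.digits_def' (by norm_num) (by omega)]
    simp [Nat.mul_div_cancel_left, Nat.mul_mod_right]

lemma digits_sum_two_mul_add_one (j : ℕ) :
    ((Nat.digits 2 (2 * j + 1)).sum) = (Nat.digits 2 j).sum + 1 := by
  rw [Nat.digits_def' (by norm_num) (by omega)]
  simp [Nat.mul_add_mod, Nat.mul_add_div]; omega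

lemma tm_two_mul (j : ℕ) : tm (2 * j) = tm j := by
  simp [tm, digits_sum_two_mul]

lemma tm_two_mul_add_one (j : ℕ) : tm (2 * j + 1) = -tm j := by
  simp only [tm, digits_sum_two_mul_add_one, Nat.even_add_one]
  rcases Nat.even_or_odd ((Nat.digits 2 j).sum) with h | h
  · simp [h]
  · simp [h, Nat.not_even_iff_odd.mpr h]

lemma tm_one : tm 1 = -1 := by have := tm_two_mul_add_one 0; simpa [tm_zero] using this

lemma tm_two : tm 2 = -1 := by have := tm_two_mul (1); simp [tm_one] at this ⊢; omega

lemma tm_eq_one_iff (n : ℕ) : tm n = 1 ↔ Even ((Nat.digits 2 n).sum) := by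
  unfold tm; split_ifs with h
  · simpa using h
  · constructor
    · intro hc; norm_num at hc
    · intro hc; exact absurd hc h

lemma tm_eq_neg_one_iff (n : ℕ) : tm n = -1 ↔ ¬ Even ((Nat.digits 2 n).sum) := by
  unfold tm; split_ifs with h
  · constructor
    · intro hc; norm_num at hc
    · intro hc; exact absurd h hc
  · simpa using h

lemma pow_of_shift (q : ℕ) (hq : 0 < q) (h : ∀ k < q, tm (q + k) = -tm k) :
    ∃ l, q = 2 ^ l := by
  induction q using Nat.strong_induction_on with
  | _ q ih =>
    rcases Nat.even_or_odd q with ⟨q', rfl⟩ | ⟨q', rfl⟩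
    · have hq' : 0 < q' := by omega
      obtain ⟨l, hl⟩ := ih q' (by omega) hq' (fun k hk => by
        have h1 := h (2 * k) (by omega)
        have : tm (q' + q' + 2 * k) = tm (2 * (q' + k)) := by ring_nf
        rw [this, tm_two_mul, tm_two_mul] at h1
        exact h1)
      exact ⟨l + 1, by rw [hl]; ring⟩
    · rcases Nat.eq_zero_or_pos q' with rfl | hq'
      · exact ⟨0, by omega⟩
      · exfalso
        have h1 := h 1 (by omega)
        have h2 := h 2 (by omega)
        have e1 : 2 * q' + 1 + 1 = 2 * (q' + 1) := by ring
        have e2 : 2 * q' + 1 + 2 = 2 * (q' + 1) + 1 := by ring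
        rw [e1, tm_two_mul, tm_one] at h1
        rw [e2, tm_two_mul_add_one] at h2
        rw [tm_two] at h2
        omega

lemma tm_pow_add (l k : ℕ) (hk : k < 2 ^ l) : tm (2 ^ l + k) = -tm k := by
  induction l generalizing k with
  | zero =>
    interval_cases k
    simpa [tm_zero] using tm_one
  | succ l ih =>
    rcases Nat.even_or_odd k with ⟨k', rfl⟩ | ⟨k', rfl⟩
    · have e : 2 ^ (l+1) + (k' + k') = 2 * (2 ^ l + k') := by ring
      rw [e, tm_two_mul, ih k' (by omega)]
      rw [show k' + k' = 2 * k' by ring, tm_two_mul]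
    · have e : 2 ^ (l+1) + (2 * k' + 1) = 2 * (2 ^ l + k') + 1 := by ring
      rw [e, tm_two_mul_add_one, ih k' (by omega), tm_two_mul_add_one]

/-! ### The core arithmetic lemmas about the difference sequence -/

lemma core_forward (m : ℕ) (g : ℕ → ℤ)
    (hg0 : g 0 = 1)
    (hz : ∀ n, m < n → g n = 0)
    (FE : ∀ n : ℕ, (∑ k ∈ Finset.range (n+1), g k) - (∑ k ∈ Finset.range (n - m), g k)
        = if 2 ∣ n then g (n / 2) else 0) :
    ∃ l, m = 2 ^ l - 1 ∧ ∀ n, n ≤ m → g n = tm n := by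
  set G : ℕ → ℤ := fun N => ∑ k ∈ Finset.range N, g k with hG
  have hGsucc : ∀ N, G (N+1) = G N + g N := fun N => Finset.sum_range_succ g N
  have hG0 : G 0 = 0 := Finset.sum_range_zero g
  have hG1 : G 1 = 1 := by rw [hGsucc 0, hG0, hg0]; ring
  have FE' : ∀ n : ℕ, G (n+1) - G (n - m) = if 2 ∣ n then g (n / 2) else 0 := FE
  have F1 : ∀ n, n ≤ m → G (n+1) = if 2 ∣ n then g (n/2) else 0 := by
    intro n hn
    have h := FE' n
    rw [Nat.sub_eq_zero_of_le hn] at h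
    simpa [hG0] using h
  have F2 : ∀ n, n ≤ m → g n = tm n := by
    intro n
    induction n using Nat.strong_induction_on with
    | _ n ih =>
      intro hn
      rcases Nat.eq_zero_or_pos n with rfl | hpos
      · rw [hg0, tm_zero]
      rcases Nat.even_or_odd n with ⟨j, rfl⟩ | ⟨j, rfl⟩
      · have hj : 0 < j := by omega
        rw [show j + j = 2 * j by ring] at hn ⊢
        have h1 := F1 (2*j) hn
        rw [if_pos (by omega : 2 ∣ (2*j)), show (2*j)/2 = j by omega] at h1
        have h2 := F1 (2*j - 1) (by omega)
        rw [if_neg (by omega), show 2*j - 1 + 1 = 2*j by omega] at h2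
        have h3 := hGsucc (2*j)
        have hgj : g j = tm j := ih j (by omega) (by omega)
        rw [tm_two_mul]
        linarith
      · have h1 := F1 (2*j+1) hn
        rw [if_neg (by omega)] at h1
        have h2 := F1 (2*j) (by omega)
        rw [if_pos (by omega : 2 ∣ (2*j)), show (2*j)/2 = j by omega] at h2
        have h3 := hGsucc (2*j+1)
        have hgj : g j = tm j := ih j (by omega) (by omega)
        rw [tm_two_mul_add_one]
        linarith
  have F3 : ∀ N, m + 1 ≤ N → G N = G (m+1) := by
    intro N h
    induction N, h using Nat.le_induction with
    | base => rfl
    | succ N hN ih => rw [hGsucc N, hz N (by omega), ih]; ring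
  rcases Nat.eq_zero_or_pos m with rfl | hm
  · exact ⟨0, by norm_num, fun n hn => by interval_cases n; rw [hg0, tm_zero]⟩
  have hmodd : ¬ 2 ∣ m := by
    intro hdvd
    have hm2 : 2 ≤ m := by omega
    have h1 := FE' (m+1)
    rw [if_neg (by omega), show m + 1 - m = 1 by omega] at h1
    have e1 : G (m+1+1) = G (m+1) := F3 (m+2) (by omega)
    have e2 : G (m+1) = g (m/2) := by rw [F1 m le_rfl, if_pos hdvd]
    have h2 := FE' (m+3)
    rw [if_neg (by omega), show m + 3 - m = 3 by omega] at h2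
    have e3 : G (m+3+1) = G (m+1) := F3 (m+4) (by omega)
    have e4 : G 3 = g 1 := by
      have := F1 2 hm2
      rw [if_pos (by omega : 2 ∣ 2)] at this
      simpa using this
    have e5 : g 1 = -1 := by rw [F2 1 (by omega), tm_one]
    linarith
  obtain ⟨q, hq⟩ : ∃ q, m = 2*q - 1 ∧ 1 ≤ q := ⟨(m+1)/2, by omega⟩
  obtain ⟨hmq, hq1⟩ := hq
  have hGm1 : G (m+1) = 0 := by rw [F1 m le_rfl, if_neg hmodd]
  have key : ∀ k < q, tm (q + k) = -tm k := by
    intro k hk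
    have h := FE' (2*(q+k))
    rw [if_pos (by omega : 2 ∣ (2*(q+k))), show (2*(q+k))/2 = q + k by omega,
        show 2*(q+k) - m = 2*k+1 by omega] at h
    have e1 : G (2*(q+k)+1) = G (m+1) := F3 _ (by omega)
    have e2 : G (2*k+1) = g k := by
      have := F1 (2*k) (by omega)
      rw [if_pos (by omega : 2 ∣ (2*k)), show (2*k)/2 = k by omega] at this
      exact this
    rw [e1, hGm1, e2] at h
    rw [← F2 (q+k) (by omega), ← F2 k (by omega)]
    linarith
  obtain ⟨l, hl⟩ := pow_of_shift q hq1 key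
  exact ⟨l + 1, by omega, F2⟩

lemma core_backward (l : ℕ) (g : ℕ → ℤ)
    (hz : ∀ n, 2^l - 1 < n → g n = 0)
    (hv : ∀ n, n ≤ 2^l - 1 → g n = tm n) :
    ∀ n : ℕ, (∑ k ∈ Finset.range (n+1), g k) - (∑ k ∈ Finset.range (n - (2^l - 1)), g k)
        = if 2 ∣ n then g (n / 2) else 0 := by
  set G : ℕ → ℤ := fun N => ∑ k ∈ Finset.range N, g k with hG
  have hGsucc : ∀ N, G (N+1) = G N + g N := fun N => Finset.sum_range_succ g N
  have hG0 : G 0 = 0 := Finset.sum_range_zero g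
  have goal_eq : ∀ n : ℕ, (G (n+1) - G (n - (2^l - 1)) = if 2 ∣ n then g (n / 2) else 0) →
      ((∑ k ∈ Finset.range (n+1), g k) - (∑ k ∈ Finset.range (n - (2^l - 1)), g k)
        = if 2 ∣ n then g (n / 2) else 0) := fun n h => h
  rcases Nat.eq_zero_or_pos l with rfl | hl
  · have hg0 : g 0 = 1 := by rw [hv 0 (by norm_num), tm_zero]
    have hGall : ∀ N, 1 ≤ N → G N = 1 := by
      intro N h
      induction N, h using Nat.le_induction with
      | base => rw [hGsucc 0, hG0, hg0]; ring
      | succ N hN ih => rw [hGsucc N, hz N (by omega), ih]; ring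
    intro n
    apply goal_eq
    rcases Nat.eq_zero_or_pos n with rfl | hn
    · simp [hGall 1 le_rfl, hG0, hg0]
    · rw [show n - (2^0 - 1) = n by omega, hGall (n+1) (by omega), hGall n hn]
      rcases Nat.even_or_odd n with ⟨j, rfl⟩ | ⟨j, rfl⟩
      · rw [if_pos (by omega : 2 ∣ (j + j)), hz ((j+j)/2) (by simp only [pow_zero]; omega)]
        ring
      · rw [if_neg (by omega)]; ring
  set m := 2^l - 1 with hm
  obtain ⟨q, hq, hq1⟩ : ∃ q, m = 2*q - 1 ∧ q = 2^(l-1) := ⟨2^(l-1), by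
    constructor
    · have : 2^l = 2 * 2^(l-1) := by
        rw [← pow_succ']
        congr 1
        omega
      omega
    · rfl⟩
  have hq0 : 0 < q := by rw [hq1]; positivity
  have hm1 : m + 1 = 2*q := by omega
  have Geven : ∀ j, G (2*j) = 0 := by
    intro j
    induction j with
    | zero => exact hG0
    | succ j ih =>
      have e : 2*(j+1) = (2*j+1)+1 := by ring
      rw [e, hGsucc, hGsucc, ih]
      rcases le_or_gt (2*j+1) m with h | h
      · rw [hv (2*j) (by omega), hv (2*j+1) (by omega), tm_two_mul, tm_two_mul_add_one]
        ring
      · have h2 : m < 2*j := by omega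
        rw [hz (2*j) h2, hz (2*j+1) h]
        ring
  have Godd : ∀ j, G (2*j+1) = if 2*j ≤ m then tm j else 0 := by
    intro j
    rw [hGsucc, Geven]
    rcases le_or_gt (2*j) m with h | h
    · rw [if_pos h, hv (2*j) h, tm_two_mul]; ring
    · rw [if_neg (by omega), hz (2*j) h]; ring
  intro n
  apply goal_eq
  rcases Nat.even_or_odd n with ⟨j, rfl⟩ | ⟨j, rfl⟩
  · rw [show j + j = 2*j by ring, if_pos (by omega : 2 ∣ (2*j)),
        show (2*j)/2 = j by omega]
    rcases le_or_gt (2*j) m with h | h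
    · rw [show 2*j - m = 0 by omega, hG0, Godd j, if_pos h, hv j (by omega)]
      ring
    · have hjq : q ≤ j := by omega
      obtain ⟨k, rfl⟩ : ∃ k, j = q + k := ⟨j - q, by omega⟩
      have e : 2*(q+k) - m = 2*k + 1 := by omega
      rw [Godd (q+k), if_neg (by omega), e, Godd k]
      rcases lt_or_ge k q with hk | hk
      · rw [if_pos (by omega), hv (q+k) (by omega), hq1,
            tm_pow_add (l-1) k (by rw [← hq1]; exact hk)]
        ring
      · rw [if_neg (by omega), hz (q+k) (by omega)]
        ring
  · rw [if_neg (by omega)]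
    have e2 : G (2*j+1+1) = G (2*(j+1)) := by ring_nf
    rw [e2, Geven]
    obtain ⟨t, ht⟩ : ∃ t, 2*j+1 - m = 2*t := by
      rcases le_or_gt m (2*j+1) with h | h
      · exact ⟨(2*j+1-m)/2, by omega⟩
      · exact ⟨0, by omega⟩
    rw [ht, Geven]
    ring

/-! ### Counting lemmas -/

open Finset

lemma R_eq (S : Set ℕ) (n : ℕ) [DecidablePred (· ∈ S)] :
    R S n = ((range (n+1)).filter (fun a => a ∈ S ∧ (n - a) ∈ S ∧ 2*a < n)).card := by
  classical
  have hset : {p : ℕ × ℕ | p.1 ∈ S ∧ p.2 ∈ S ∧ p.1 < p.2 ∧ p.1 + p.2 = n}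
      = ↑(((range (n+1)) ×ˢ (range (n+1))).filter
          (fun p => p.1 ∈ S ∧ p.2 ∈ S ∧ p.1 < p.2 ∧ p.1 + p.2 = n)) := by
    ext ⟨a, b⟩
    simp only [Set.mem_setOf_eq, coe_filter, Finset.mem_product, Finset.mem_range,
      Nat.lt_succ_iff]
    constructor
    · rintro ⟨h1, h2, h3, h4⟩; exact ⟨⟨by omega, by omega⟩, h1, h2, h3, h4⟩
    · rintro ⟨_, h⟩; exact h
  rw [R, hset, Set.ncard_coe_finset]
  apply Finset.card_bij (fun p _ => p.1)
  · rintro ⟨a, b⟩ hp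
    simp only [mem_filter, Finset.mem_product, Finset.mem_range, Nat.lt_succ_iff] at hp ⊢
    obtain ⟨⟨ha, hb⟩, h1, h2, h3, h4⟩ := hp
    refine ⟨by omega, h1, ?_, by omega⟩
    rw [show n - a = b by omega]; exact h2
  · rintro ⟨a, b⟩ hp ⟨a', b'⟩ hp' hab
    simp only [mem_filter, Finset.mem_product, Finset.mem_range, Nat.lt_succ_iff] at hp hp'
    simp only at hab
    have : b = b' := by omega
    simp [hab, this]
  · intro a ha
    simp only [mem_filter, Finset.mem_range, Nat.lt_succ_iff] at ha
    obtain ⟨ha1, h1, h2, h3⟩ := ha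
    refine ⟨(a, n - a), ?_, rfl⟩
    simp only [mem_filter, Finset.mem_product, Finset.mem_range, Nat.lt_succ_iff]
    exact ⟨⟨ha1, by omega⟩, h1, h2, by omega, by omega⟩

lemma card_gt (S : Set ℕ) (n : ℕ) [DecidablePred (· ∈ S)] :
    ((range (n+1)).filter (fun a => a ∈ S ∧ (n - a) ∈ S ∧ n < 2*a)).card
    = ((range (n+1)).filter (fun a => a ∈ S ∧ (n - a) ∈ S ∧ 2*a < n)).card := by
  apply Finset.card_bij (fun a _ => n - a)
  · intro a ha
    simp only [mem_filter, Finset.mem_range, Nat.lt_succ_iff] at ha ⊢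
    obtain ⟨ha1, h1, h2, h3⟩ := ha
    refine ⟨by omega, h2, ?_, by omega⟩
    rw [show n - (n - a) = a by omega]; exact h1
  · intro a ha a' ha' h
    simp only [mem_filter, Finset.mem_range, Nat.lt_succ_iff] at ha ha'
    omega
  · intro a ha
    simp only [mem_filter, Finset.mem_range, Nat.lt_succ_iff] at ha
    obtain ⟨ha1, h1, h2, h3⟩ := ha
    refine ⟨n - a, ?_, by omega⟩
    simp only [mem_filter, Finset.mem_range, Nat.lt_succ_iff]
    refine ⟨by omega, h2, ?_, by omega⟩
    rw [show n - (n - a) = a by omega]; exact h1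

lemma card_eq_diag (S : Set ℕ) (n : ℕ) [DecidablePred (· ∈ S)] :
    ((range (n+1)).filter (fun a => a ∈ S ∧ (n - a) ∈ S ∧ 2*a = n)).card
    = (if 2 ∣ n ∧ n/2 ∈ S then 1 else 0) := by
  split_ifs with h
  · obtain ⟨hd, hS⟩ := h
    rw [show (range (n+1)).filter (fun a => a ∈ S ∧ (n - a) ∈ S ∧ 2*a = n) = {n/2} from ?_]
    · simp
    · ext a
      simp only [mem_filter, Finset.mem_range, Nat.lt_succ_iff, Finset.mem_singleton]
      constructor
      · rintro ⟨_, _, _, h3⟩; omega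
      · rintro rfl
        refine ⟨by omega, hS, ?_, by omega⟩
        rw [show n - n/2 = n/2 by omega]; exact hS
  · rw [Finset.card_eq_zero, Finset.filter_eq_empty_iff]
    intro a ha
    simp only [Finset.mem_range, Nat.lt_succ_iff] at ha
    rintro ⟨h1, h2, h3⟩
    exact h ⟨by omega, by rw [show n/2 = a by omega]; exact h1⟩

lemma count_total (S : Set ℕ) (n : ℕ) [DecidablePred (· ∈ S)] :
    ((range (n+1)).filter (fun a => a ∈ S ∧ (n - a) ∈ S)).card
      = 2 * R S n + (if 2 ∣ n ∧ n/2 ∈ S then 1 else 0) := by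
  classical
  have key : ∀ a ∈ range (n+1),
      (if a ∈ S ∧ (n - a) ∈ S then (1:ℕ) else 0)
      = (if a ∈ S ∧ (n - a) ∈ S ∧ 2*a < n then (1:ℕ) else 0)
      + (if a ∈ S ∧ (n - a) ∈ S ∧ 2*a = n then (1:ℕ) else 0)
      + (if a ∈ S ∧ (n - a) ∈ S ∧ n < 2*a then (1:ℕ) else 0) := by
    intro a _
    by_cases hP : a ∈ S ∧ (n - a) ∈ S
    · simp only [hP, true_and, if_true]
      split_ifs <;> omega
    · rw [if_neg hP, if_neg (by tauto), if_neg (by tauto), if_neg (by tauto)]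
  rw [Finset.card_filter, Finset.sum_congr rfl key, Finset.sum_add_distrib,
      Finset.sum_add_distrib, ← Finset.card_filter, ← Finset.card_filter,
      ← Finset.card_filter, card_eq_diag, card_gt, ← R_eq]
  ring

/-! ### The master identity -/

lemma master (m : ℕ) (C D : Set ℕ) [DecidablePred (· ∈ C)] [DecidablePred (· ∈ D)]
    (hU : C ∪ D = Set.Iic m) (hI : C ∩ D = ∅) (n : ℕ) :
    ((∑ k ∈ range (n+1), ((if k ∈ C then (1:ℤ) else 0) - (if k ∈ D then 1 else 0)))
      - ∑ k ∈ range (n - m), ((if k ∈ C then (1:ℤ) else 0) - (if k ∈ D then 1 else 0)))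
      - (if 2 ∣ n then ((if n/2 ∈ C then (1:ℤ) else 0) - (if n/2 ∈ D then 1 else 0)) else 0)
    = 2 * ((R C n : ℤ) - (R D n : ℤ)) := by
  set iC : ℕ → ℤ := fun a => if a ∈ C then 1 else 0 with hiC
  set iD : ℕ → ℤ := fun a => if a ∈ D then 1 else 0 with hiD
  set g : ℕ → ℤ := fun a => iC a - iD a with hg
  have hdisj : ∀ x, x ∈ C → x ∈ D → False := by
    intro x hx hy
    have : x ∈ C ∩ D := ⟨hx, hy⟩
    rw [hI] at this
    exact this
  have hmem : ∀ a : ℕ, a ≤ m ↔ (a ∈ C ∨ a ∈ D) := by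
    intro a
    rw [← Set.mem_Iic, ← hU]
    exact Iff.rfl
  have indsum : ∀ b : ℕ, (if b ≤ m then (1:ℤ) else 0) = iC b + iD b := by
    intro b
    by_cases hb : b ≤ m
    · rcases (hmem b).mp hb with h | h
      · have hnd : b ∉ D := fun hd => hdisj b h hd
        simp [hiC, hiD, h, hb, hnd]
      · have hnc : b ∉ C := fun hc => hdisj b hc h
        simp [hiC, hiD, h, hb, hnc]
    · have h1 : b ∉ C := fun h => hb ((hmem b).mpr (Or.inl h))
      have h2 : b ∉ D := fun h => hb ((hmem b).mpr (Or.inr h))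
      simp [hiC, hiD, h1, h2, hb]
  have step1 : ∑ a ∈ range (n+1), g a * (if n - a ≤ m then (1:ℤ) else 0)
      = (∑ k ∈ range (n+1), g k) - (∑ k ∈ range (n - m), g k) := by
    have hpt : ∀ a ∈ range (n+1),
        g a * (if n - a ≤ m then (1:ℤ) else 0) = if n - m ≤ a then g a else 0 := by
      intro a ha
      simp only [mem_range, Nat.lt_succ_iff] at ha
      by_cases h : n - m ≤ a
      · rw [if_pos h, if_pos (by omega)]; ring
      · rw [if_neg h, if_neg (by omega)]; ring
    rw [Finset.sum_congr rfl hpt, ← Finset.sum_filter]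
    have hfil : (range (n+1)).filter (fun a => n - m ≤ a) = Finset.Ico (n - m) (n+1) := by
      ext a
      simp only [mem_filter, mem_range, Finset.mem_Ico, Nat.lt_succ_iff]
      omega
    rw [hfil, Finset.sum_Ico_eq_sub g (by omega : n - m ≤ n + 1)]
  have cross : ∑ a ∈ range (n+1), iC a * iD (n - a)
      = ∑ a ∈ range (n+1), iD a * iC (n - a) := by
    have hr := Finset.sum_range_reflect (fun a => iC a * iD (n - a)) (n+1)
    rw [← hr]
    apply Finset.sum_congr rfl
    intro j hj
    simp only [mem_range, Nat.lt_succ_iff] at hj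
    rw [show n + 1 - 1 - j = n - j by omega, show n - (n - j) = j by omega, mul_comm]
  have expand : ∑ a ∈ range (n+1), g a * (if n - a ≤ m then (1:ℤ) else 0)
      = (∑ a ∈ range (n+1), iC a * iC (n-a)) - (∑ a ∈ range (n+1), iD a * iD (n-a)) := by
    have hpt : ∀ a ∈ range (n+1),
        g a * (if n - a ≤ m then (1:ℤ) else 0)
        = (iC a * iC (n-a) - iD a * iD (n-a)) + (iC a * iD (n-a) - iD a * iC (n-a)) := by
      intro a _
      rw [indsum (n - a)]
      simp only [hg]
      ring
    rw [Finset.sum_congr rfl hpt, Finset.sum_add_distrib, Finset.sum_sub_distrib,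
        Finset.sum_sub_distrib, cross]
    ring
  have hcC : ∑ a ∈ range (n+1), iC a * iC (n-a)
      = (((range (n+1)).filter (fun a => a ∈ C ∧ (n - a) ∈ C)).card : ℤ) := by
    have hpt : ∀ a ∈ range (n+1),
        iC a * iC (n-a) = if a ∈ C ∧ (n - a) ∈ C then (1:ℤ) else 0 := by
      intro a _
      by_cases h1 : a ∈ C <;> by_cases h2 : (n - a) ∈ C <;> simp [hiC, h1, h2]
    rw [Finset.sum_congr rfl hpt, Finset.sum_boole]
  have hcD : ∑ a ∈ range (n+1), iD a * iD (n-a)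
      = (((range (n+1)).filter (fun a => a ∈ D ∧ (n - a) ∈ D)).card : ℤ) := by
    have hpt : ∀ a ∈ range (n+1),
        iD a * iD (n-a) = if a ∈ D ∧ (n - a) ∈ D then (1:ℤ) else 0 := by
      intro a _
      by_cases h1 : a ∈ D <;> by_cases h2 : (n - a) ∈ D <;> simp [hiD, h1, h2]
    rw [Finset.sum_congr rfl hpt, Finset.sum_boole]
  have hc2C : (((range (n+1)).filter (fun a => a ∈ C ∧ (n - a) ∈ C)).card : ℤ)
      = 2 * (R C n : ℤ) + (if 2 ∣ n ∧ n/2 ∈ C then (1:ℤ) else 0) := by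
    rw [count_total]; push_cast; ring
  have hc2D : (((range (n+1)).filter (fun a => a ∈ D ∧ (n - a) ∈ D)).card : ℤ)
      = 2 * (R D n : ℤ) + (if 2 ∣ n ∧ n/2 ∈ D then (1:ℤ) else 0) := by
    rw [count_total]; push_cast; ring
  have diag : (if 2 ∣ n ∧ n/2 ∈ C then (1:ℤ) else 0) - (if 2 ∣ n ∧ n/2 ∈ D then (1:ℤ) else 0)
      = if 2 ∣ n then g (n/2) else 0 := by
    simp only [hg, hiC, hiD]
    by_cases h : 2 ∣ n
    · simp only [h, true_and, if_true]
    · simp [h]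
  calc ((∑ k ∈ range (n+1), g k) - ∑ k ∈ range (n - m), g k)
        - (if 2 ∣ n then g (n/2) else 0)
      = (∑ a ∈ range (n+1), g a * (if n - a ≤ m then (1:ℤ) else 0))
        - (if 2 ∣ n then g (n/2) else 0) := by rw [step1]
    _ = ((2 * (R C n : ℤ) + (if 2 ∣ n ∧ n/2 ∈ C then (1:ℤ) else 0))
        - (2 * (R D n : ℤ) + (if 2 ∣ n ∧ n/2 ∈ D then (1:ℤ) else 0)))
        - (if 2 ∣ n then g (n/2) else 0) := by rw [expand, hcC, hcD, hc2C, hc2D]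
    _ = 2 * ((R C n : ℤ) - (R D n : ℤ)) := by rw [← diag]; ring

/-! ### Main theorem -/

theorem finite_partition_iff_thueMorse (m : ℕ) (C D : Set ℕ)
    (hU : C ∪ D = Set.Iic m) (hI : C ∩ D = ∅) (h0 : (0 : ℕ) ∈ C) :
    (∀ n : ℕ, 0 < n → R C n = R D n) ↔
      ∃ l : ℕ, m = 2 ^ l - 1 ∧ C = Af l ∧ D = Bf l := by
  classical
  set g : ℕ → ℤ := fun a => (if a ∈ C then (1:ℤ) else 0) - (if a ∈ D then 1 else 0) with hgdef
  have hdisj : ∀ x, x ∈ C → x ∈ D → False := by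
    intro x hx hy
    have : x ∈ C ∩ D := ⟨hx, hy⟩
    rw [hI] at this
    exact this
  have hmem : ∀ a : ℕ, a ≤ m ↔ (a ∈ C ∨ a ∈ D) := by
    intro a
    rw [← Set.mem_Iic, ← hU]
    exact Iff.rfl
  have h0D : (0:ℕ) ∉ D := fun h => hdisj 0 h0 h
  have hg0 : g 0 = 1 := by simp [hgdef, h0, h0D]
  have hz : ∀ a, m < a → g a = 0 := by
    intro a ha
    have h1 : a ∉ C := fun h => by have := (hmem a).mpr (Or.inl h); omega
    have h2 : a ∉ D := fun h => by have := (hmem a).mpr (Or.inr h); omega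
    simp [hgdef, h1, h2]
  constructor
  · intro hR
    have FE : ∀ n : ℕ, (∑ k ∈ Finset.range (n+1), g k) - (∑ k ∈ Finset.range (n - m), g k)
        = if 2 ∣ n then g (n / 2) else 0 := by
      intro n
      have hM : ((∑ k ∈ range (n+1), g k) - ∑ k ∈ range (n - m), g k)
          - (if 2 ∣ n then g (n/2) else 0)
          = 2 * ((R C n : ℤ) - (R D n : ℤ)) := master m C D hU hI n
      rcases Nat.eq_zero_or_pos n with rfl | hn
      · norm_num [Finset.sum_range_one, hg0]
      · rw [hR n hn] at hM
        have : ((∑ k ∈ range (n+1), g k) - ∑ k ∈ range (n - m), g k)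
            - (if 2 ∣ n then g (n/2) else 0) = 0 := by rw [hM]; ring
        linarith [this]
    obtain ⟨l, hml, hval⟩ := core_forward m g hg0 hz FE
    refine ⟨l, hml, ?_, ?_⟩
    · ext a
      simp only [Af, Set.mem_inter_iff, Set.mem_Iic, A, Set.mem_setOf_eq]
      constructor
      · intro haC
        have ham : a ≤ m := (hmem a).mpr (Or.inl haC)
        have hnd : a ∉ D := fun hd => hdisj a haC hd
        have hga : g a = 1 := by simp [hgdef, haC, hnd]
        have htm : tm a = 1 := by rw [← hval a ham]; exact hga
        exact ⟨(tm_eq_one_iff a).mp htm, hml ▸ ham⟩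
      · rintro ⟨hA, hal⟩
        have ham : a ≤ m := hml ▸ hal
        have htm : tm a = 1 := (tm_eq_one_iff a).mpr hA
        have hga : g a = 1 := by rw [hval a ham]; exact htm
        rcases (hmem a).mp ham with h | h
        · exact h
        · exfalso
          have hnc : a ∉ C := fun hc => hdisj a hc h
          simp [hgdef, hnc, h] at hga
    · ext a
      simp only [Bf, Set.mem_inter_iff, Set.mem_Iic, B, A, Set.mem_compl_iff,
        Set.mem_setOf_eq]
      constructor
      · intro haD
        have ham : a ≤ m := (hmem a).mpr (Or.inr haD)
        have hnc : a ∉ C := fun hc => hdisj a hc haD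
        have hga : g a = -1 := by simp [hgdef, hnc, haD]
        have htm : tm a = -1 := by rw [← hval a ham]; exact hga
        exact ⟨(tm_eq_neg_one_iff a).mp htm, hml ▸ ham⟩
      · rintro ⟨hA, hal⟩
        have ham : a ≤ m := hml ▸ hal
        have htm : tm a = -1 := (tm_eq_neg_one_iff a).mpr hA
        have hga : g a = -1 := by rw [hval a ham]; exact htm
        rcases (hmem a).mp ham with h | h
        · exfalso
          have hnd : a ∉ D := fun hd => hdisj a h hd
          simp [hgdef, h, hnd] at hga
        · exact h
  · rintro ⟨l, hml, hC, hD⟩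
    subst hml
    have hvals : ∀ a, a ≤ 2^l - 1 → g a = tm a := by
      intro a ha
      by_cases hA : Even ((Nat.digits 2 a).sum)
      · have haC : a ∈ C := by rw [hC]; exact ⟨hA, ha⟩
        have haD : a ∉ D := by
          rw [hD]
          rintro ⟨hB, _⟩
          exact hB hA
        simp [hgdef, haC, haD, tm, hA]
      · have haD : a ∈ D := by rw [hD]; exact ⟨hA, ha⟩
        have haC : a ∉ C := by
          rw [hC]
          rintro ⟨hB, _⟩
          exact hA hB
        simp [hgdef, haC, haD, tm, hA]
    have FE := core_backward l g hz hvals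
    intro n hn
    have hM : ((∑ k ∈ range (n+1), g k) - ∑ k ∈ range (n - (2^l - 1)), g k)
        - (if 2 ∣ n then g (n/2) else 0)
        = 2 * ((R C n : ℤ) - (R D n : ℤ)) := master (2^l - 1) C D hU hI n
    rw [FE n] at hM
    simp only [sub_self] at hM
    have : (R C n : ℤ) = (R D n : ℤ) := by linarith
    exact_mod_cast this
end

section
/- If C and D are sets of nonnegative integers with C ∪ D = ℕ and C ∩ D = 4ℕ (the set of nonnegative multiples of 4), then R_C(n) ≠ R_D(n) for infinitely many positive integers n. -/
open Finset

attribute [local instance] Classical.propDecidable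

open Classical in
/-- integer indicator of a set -/
noncomputable def tyInd (S : Set ℕ) (x : ℕ) : ℤ := if x ∈ S then 1 else 0

noncomputable def tyH (C D : Set ℕ) (x : ℕ) : ℤ := tyInd C x - tyInd D x
noncomputable def tyU (C D : Set ℕ) (x : ℕ) : ℤ := tyInd C x + tyInd D x
noncomputable def tyG (C D : Set ℕ) (n : ℕ) : ℤ :=
  ∑ s ∈ Finset.range (n+1), tyU C D s * tyH C D (n-s)
noncomputable def tyHs (C D : Set ℕ) (n : ℕ) : ℤ :=
  ∑ s ∈ Finset.range (n+1), tyH C D s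
noncomputable def tyTs (C D : Set ℕ) (n : ℕ) : ℤ :=
  ∑ k ∈ Finset.range (n/4+1), tyH C D (n-4*k)

lemma R_eq_card (S : Set ℕ) (n : ℕ) :
    R S n = (((Finset.range (n+1)).filter
      (fun s => 2*s < n ∧ s ∈ S ∧ (n-s) ∈ S)).card : ℕ) := by
  rw [R]
  have hset : {p : ℕ × ℕ | p.1 ∈ S ∧ p.2 ∈ S ∧ p.1 < p.2 ∧ p.1 + p.2 = n} =
      ↑(((Finset.range (n+1)).filter
        (fun s => 2*s < n ∧ s ∈ S ∧ (n-s) ∈ S)).image (fun s => (s, n - s))) := by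
    ext ⟨a, b⟩
    simp only [Finset.coe_image, Set.mem_image, Finset.mem_coe, Finset.mem_filter,
      Finset.mem_range, Set.mem_setOf_eq, Prod.mk.injEq]
    constructor
    · rintro ⟨ha, hb, hab, hn⟩
      refine ⟨a, ⟨by omega, by omega, ha, ?_⟩, rfl, by omega⟩
      rw [show n - a = b by omega]; exact hb
    · rintro ⟨s, ⟨hs1, hs2, hs3, hs4⟩, rfl, rfl⟩
      exact ⟨hs3, hs4, by omega, by omega⟩
  rw [hset, Set.ncard_coe_finset]
  exact Finset.card_image_of_injOn fun x _ y _ hxy => ((Prod.mk.injEq ..).mp hxy).1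

lemma two_R (S : Set ℕ) (n : ℕ) (hn : Odd n) :
    2 * (R S n : ℤ) = ∑ s ∈ Finset.range (n+1), tyInd S s * tyInd S (n-s) := by
  have key : ∀ s, tyInd S s * tyInd S (n-s)
      = if (s ∈ S ∧ (n-s) ∈ S) then (1:ℤ) else 0 := by
    intro s
    unfold tyInd
    by_cases h1 : s ∈ S <;> by_cases h2 : (n-s) ∈ S <;> simp [h1, h2]
  calc 2 * (R S n : ℤ)
      = ∑ s ∈ (Finset.range (n+1)).filter (fun s => 2*s < n),
          tyInd S s * tyInd S (n-s)
        + ∑ s ∈ (Finset.range (n+1)).filter (fun s => ¬ 2*s < n),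
          tyInd S s * tyInd S (n-s) := ?_
    _ = ∑ s ∈ Finset.range (n+1), tyInd S s * tyInd S (n-s) :=
        Finset.sum_filter_add_sum_filter_not _ _ _
  -- second half equals first half via reflection s ↦ n - s
  have hrefl : ∑ s ∈ (Finset.range (n+1)).filter (fun s => ¬ 2*s < n),
      tyInd S s * tyInd S (n-s)
      = ∑ s ∈ (Finset.range (n+1)).filter (fun s => 2*s < n),
      tyInd S s * tyInd S (n-s) := by
    apply Finset.sum_nbij' (i := fun s => n - s) (j := fun s => n - s)
    · intro a ha
      simp only [Finset.mem_filter, Finset.mem_range] at ha ⊢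
      obtain ⟨h1, h2⟩ := ha
      rcases hn with ⟨t, ht⟩
      omega
    · intro a ha
      simp only [Finset.mem_filter, Finset.mem_range] at ha ⊢
      omega
    · intro a ha
      simp only [Finset.mem_filter, Finset.mem_range] at ha
      omega
    · intro a ha
      simp only [Finset.mem_filter, Finset.mem_range] at ha
      omega
    · intro a ha
      simp only [Finset.mem_filter, Finset.mem_range] at ha
      rw [show n - (n - a) = a by omega, mul_comm]
  rw [hrefl, ← two_mul]
  congr 1
  -- first half equals the cardinality
  rw [Finset.sum_congr rfl (fun s _ => key s), Finset.sum_boole, Finset.filter_filter,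
    R_eq_card]

lemma tyG_eq (C D : Set ℕ) (n : ℕ) (hn : Odd n) :
    tyG C D n = 2 * ((R C n : ℤ) - (R D n : ℤ)) := by
  have hrefl : ∑ s ∈ Finset.range (n+1), tyU C D s * tyH C D (n-s)
      = ∑ s ∈ Finset.range (n+1), tyH C D s * tyU C D (n-s) := by
    rw [← Finset.sum_range_reflect (fun s => tyH C D s * tyU C D (n-s)) (n+1)]
    apply Finset.sum_congr rfl
    intro j hj
    simp only [Finset.mem_range] at hj
    rw [show n + 1 - 1 - j = n - j from rfl, show n - (n - j) = j by omega]
    ring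
  have hterm : ∀ s, tyU C D s * tyH C D (n-s) + tyH C D s * tyU C D (n-s)
      = 2 * (tyInd C s * tyInd C (n-s) - tyInd D s * tyInd D (n-s)) := by
    intro s
    unfold tyU tyH
    ring
  have h2 : 2 * tyG C D n
      = ∑ s ∈ Finset.range (n+1),
        (tyU C D s * tyH C D (n-s) + tyH C D s * tyU C D (n-s)) := by
    rw [Finset.sum_add_distrib, ← hrefl, tyG]; ring
  rw [Finset.sum_congr rfl (fun s _ => hterm s), ← Finset.mul_sum,
    Finset.sum_sub_distrib, ← two_R C n hn, ← two_R D n hn] at h2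
  linarith

lemma tyH_zero (C D : Set ℕ) (hI : C ∩ D = {n : ℕ | 4 ∣ n}) (x : ℕ) (hx : 4 ∣ x) :
    tyH C D x = 0 := by
  have hmem : x ∈ C ∩ D := by rw [hI]; exact hx
  unfold tyH tyInd
  simp [hmem.1, hmem.2]

lemma tyH_pm (C D : Set ℕ) (hU : C ∪ D = Set.univ) (hI : C ∩ D = {n : ℕ | 4 ∣ n})
    (x : ℕ) (hx : ¬ 4 ∣ x) : tyH C D x = 1 ∨ tyH C D x = -1 := by
  have hmem : x ∈ C ∪ D := by rw [hU]; trivial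
  have hnot : ¬ (x ∈ C ∧ x ∈ D) := by
    intro h
    apply hx
    have hmem2 : x ∈ C ∩ D := ⟨h.1, h.2⟩
    rw [hI] at hmem2
    exact hmem2
  unfold tyH tyInd
  rcases hmem with h | h
  · left; have : x ∉ D := fun hd => hnot ⟨h, hd⟩; simp [h, this]
  · right; have : x ∉ C := fun hc => hnot ⟨hc, h⟩; simp [h, this]

lemma tyU_eq (C D : Set ℕ) (hU : C ∪ D = Set.univ) (hI : C ∩ D = {n : ℕ | 4 ∣ n})
    (x : ℕ) : tyU C D x = 1 + (if 4 ∣ x then 1 else 0) := by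
  by_cases hx : 4 ∣ x
  · have hmem : x ∈ C ∩ D := by rw [hI]; exact hx
    unfold tyU tyInd
    simp [hmem.1, hmem.2, hx]
  · have hmem : x ∈ C ∪ D := by rw [hU]; trivial
    have hnot : ¬ (x ∈ C ∧ x ∈ D) := by
      intro h
      apply hx
      have hmem2 : x ∈ C ∩ D := ⟨h.1, h.2⟩
      rw [hI] at hmem2
      exact hmem2
    unfold tyU tyInd
    rcases hmem with h | h
    · have : x ∉ D := fun hd => hnot ⟨h, hd⟩; simp [h, this, hx]
    · have : x ∉ C := fun hc => hnot ⟨hc, h⟩; simp [h, this, hx]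

lemma tyG_split (C D : Set ℕ) (hU : C ∪ D = Set.univ)
    (hI : C ∩ D = {n : ℕ | 4 ∣ n}) (n : ℕ) :
    tyG C D n = tyHs C D n + tyTs C D n := by
  unfold tyG
  have : ∀ s ∈ Finset.range (n+1), tyU C D s * tyH C D (n-s)
      = tyH C D (n-s) + (if 4 ∣ s then tyH C D (n-s) else 0) := by
    intro s _
    rw [tyU_eq C D hU hI]
    by_cases h : 4 ∣ s <;> simp [h] <;> ring
  rw [Finset.sum_congr rfl this, Finset.sum_add_distrib]
  congr 1
  · unfold tyHs
    rw [← Finset.sum_range_reflect (tyH C D) (n+1)]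
    apply Finset.sum_congr rfl
    intro j hj
    simp only [Finset.mem_range] at hj
    congr 1
  · rw [← Finset.sum_filter, tyTs]
    symm
    apply Finset.sum_nbij' (i := fun k => 4 * k) (j := fun s => s / 4)
    · intro a ha
      simp only [Finset.mem_filter, Finset.mem_range] at ha ⊢
      omega
    · intro a ha
      simp only [Finset.mem_filter, Finset.mem_range] at ha ⊢
      omega
    · intro a ha
      simp only [Finset.mem_range] at ha
      omega
    · intro a ha
      simp only [Finset.mem_filter, Finset.mem_range] at ha
      omega
    · intro a _
      rfl

lemma tyHs_step (C D : Set ℕ) (n : ℕ) :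
    tyHs C D (n+4) = tyHs C D n + tyH C D (n+1) + tyH C D (n+2)
      + tyH C D (n+3) + tyH C D (n+4) := by
  unfold tyHs
  rw [show n+4+1 = n+1+1+1+1+1 from rfl]
  rw [Finset.sum_range_succ, Finset.sum_range_succ, Finset.sum_range_succ,
    Finset.sum_range_succ]

lemma tyTs_step (C D : Set ℕ) (n : ℕ) :
    tyTs C D (n+4) = tyTs C D n + tyH C D (n+4) := by
  unfold tyTs
  rw [show (n+4)/4 + 1 = (n/4 + 1) + 1 by omega, Finset.sum_range_succ']
  have : ∀ k ∈ Finset.range (n/4+1), tyH C D (n+4-4*(k+1)) = tyH C D (n-4*k) := by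
    intro k _
    congr 1
    omega
  rw [Finset.sum_congr rfl this]
  simp

lemma tyG_step (C D : Set ℕ) (hU : C ∪ D = Set.univ)
    (hI : C ∩ D = {n : ℕ | 4 ∣ n}) (n : ℕ) :
    tyG C D (n+4) = tyG C D n + tyH C D (n+1) + tyH C D (n+2)
      + tyH C D (n+3) + 2 * tyH C D (n+4) := by
  rw [tyG_split C D hU hI, tyG_split C D hU hI, tyHs_step, tyTs_step]
  ring

theorem tang_yu (C D : Set ℕ)
    (hU : C ∪ D = Set.univ) (hI : C ∩ D = {n : ℕ | 4 ∣ n}) :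
    {n : ℕ | 0 < n ∧ R C n ≠ R D n}.Infinite := by
  by_contra hfin
  rw [Set.not_infinite] at hfin
  obtain ⟨N, hN⟩ := hfin.bddAbove
  have hG0 : ∀ n : ℕ, N < n → Odd n → tyG C D n = 0 := by
    intro n hn hodd
    have hnot : n ∉ {n : ℕ | 0 < n ∧ R C n ≠ R D n} := by
      intro hmem
      exact absurd (hN hmem) (by omega)
    simp only [Set.mem_setOf_eq, not_and, not_not] at hnot
    have hR : R C n = R D n := hnot (by omega)
    rw [tyG_eq C D n hodd, hR]
    ring
  set m : ℕ := 4 * N + 7 with hm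
  have hodd : ∀ j : ℕ, Odd (m + 2*j) := by
    intro j; exact ⟨2*N + j + 3, by omega⟩
  have g0 : tyG C D m = 0 := hG0 m (by omega) (by simpa using hodd 0)
  have g2 : tyG C D (m+2) = 0 := hG0 (m+2) (by omega) (hodd 1)
  have g4 : tyG C D (m+4) = 0 := hG0 (m+4) (by omega) (hodd 2)
  have g6 : tyG C D (m+6) = 0 := hG0 (m+6) (by omega) (hodd 3)
  have e1 := tyG_step C D hU hI m
  have e2 := tyG_step C D hU hI (m+2)
  rw [g0, g4] at e1
  rw [g2] at e2
  rw [show m+2+4 = m+6 from rfl, g6] at e2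
  rw [show m+2+1 = m+3 from rfl, show m+2+2 = m+4 from rfl,
    show m+2+3 = m+5 from rfl] at e2
  have h1 : tyH C D (m+1) = 0 := tyH_zero C D hI (m+1) ⟨N+2, by omega⟩
  have h5 : tyH C D (m+5) = 0 := tyH_zero C D hI (m+5) ⟨N+3, by omega⟩
  have h2 := tyH_pm C D hU hI (m+2) (by omega)
  have h3 := tyH_pm C D hU hI (m+3) (by omega)
  have h4 := tyH_pm C D hU hI (m+4) (by omega)
  have h6 := tyH_pm C D hU hI (m+6) (by omega)
  rw [h1] at e1
  rw [h5] at e2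
  rcases h2 with h2 | h2 <;> rcases h3 with h3 | h3 <;>
    rcases h4 with h4 | h4 <;> rcases h6 with h6 | h6 <;> omega
end

section
/- For every natural number l and every positive integer n, R_{A_l}(n) = R_{B_l}(n). -/
open Set

namespace Nat

theorem xor_one_add_xor_one {u v : ℕ} (h : u % 2 ≠ v % 2) : (u ^^^ 1) + (v ^^^ 1) = u + v := by
  have hu : (u ^^^ 1) / 2 = u / 2 := by simp [xor_div_two]
  have hv : (v ^^^ 1) / 2 = v / 2 := by simp [xor_div_two]
  have hu' : (u ^^^ 1) % 2 = (u + 1) % 2 := xor_mod_two_eq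
  have hv' : (v ^^^ 1) % 2 = (v + 1) % 2 := xor_mod_two_eq
  omega

theorem xor_two_pow_eq_two_pow_mul_add_mod (x k : ℕ) :
    x ^^^ 2 ^ k = 2 ^ k * (x / 2 ^ k ^^^ 1) + x % 2 ^ k := by
  conv_lhs => rw [← div_add_mod (x ^^^ 2 ^ k) (2 ^ k)]
  rw [xor_div_two_pow, xor_mod_two_pow, Nat.div_self (by positivity), mod_self, xor_zero]

theorem xor_two_pow_add_xor_two_pow {x y k : ℕ} (h : x.testBit k ≠ y.testBit k) :
    (x ^^^ 2 ^ k) + (y ^^^ 2 ^ k) = x + y := by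
  have hxy : (x / 2 ^ k ^^^ 1) + (y / 2 ^ k ^^^ 1) = x / 2 ^ k + y / 2 ^ k := by
    rw [testBit_eq_decide_div_mod_eq, testBit_eq_decide_div_mod_eq] at h
    exact xor_one_add_xor_one fun he => h (by rw [he])
  rw [xor_two_pow_eq_two_pow_mul_add_mod x, xor_two_pow_eq_two_pow_mul_add_mod y]
  conv_rhs => rw [← div_add_mod x (2 ^ k), ← div_add_mod y (2 ^ k)]
  generalize x / 2 ^ k ^^^ 1 = x' at *
  generalize y / 2 ^ k ^^^ 1 = y' at *
  linear_combination 2 ^ k * hxy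

theorem xor_two_pow_lt_xor_two_pow {x y k : ℕ} (hxy : x < y) (hk : 2 ^ (k + 1) ≤ x ^^^ y) :
    x ^^^ 2 ^ k < y ^^^ 2 ^ k := by
  have hpow : 2 ^ k / 2 ^ (k + 1) = 0 := div_eq_of_lt (Nat.pow_lt_pow_succ one_lt_two)
  have hne : x / 2 ^ (k + 1) ≠ y / 2 ^ (k + 1) := by
    rw [Ne, ← xor_eq_zero_iff, ← xor_div_two_pow, div_eq_zero_iff_lt (by positivity)]
    omega
  refine lt_of_div_lt_div (c := 2 ^ (k + 1)) ?_
  rw [xor_div_two_pow, xor_div_two_pow, hpow, xor_zero, xor_zero]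
  exact lt_of_le_of_ne (Nat.div_le_div_right hxy.le) hne

theorem testBit_factorization_two {d : ℕ} (hd : d ≠ 0) : d.testBit (d.factorization 2) := by
  have := not_dvd_ordCompl prime_two hd
  simpa [testBit_eq_decide_div_mod_eq, two_dvd_ne_zero] using this

end Nat

theorem mem_A_iff_even_iff_div_two_mem (n : ℕ) : n ∈ A ↔ (Even n ↔ n / 2 ∈ A) := by
  rcases Nat.eq_zero_or_pos n with rfl | hn
  · simp [A]
  · show Even (Nat.digits 2 n).sum ↔ (Even n ↔ Even (Nat.digits 2 (n / 2)).sum)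
    rw [Nat.digits_def' one_lt_two hn, List.sum_cons, Nat.even_add, Nat.even_iff, Nat.mod_mod,
      ← Nat.even_iff]

theorem xor_mem_A_iff (x y : ℕ) : x ^^^ y ∈ A ↔ (x ∈ A ↔ y ∈ A) := by
  induction x using Nat.strong_induction_on generalizing y with
  | _ x ih =>
    rcases Nat.eq_zero_or_pos x with rfl | hx
    · simp [A]
    · rw [mem_A_iff_even_iff_div_two_mem (x ^^^ y), mem_A_iff_even_iff_div_two_mem x,
        mem_A_iff_even_iff_div_two_mem y, Nat.xor_div_two, Nat.even_xor,
        ih (x / 2) (Nat.div_lt_self hx one_lt_two)]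
      tauto

theorem two_pow_notMem_A (k : ℕ) : 2 ^ k ∉ A := by
  induction k with
  | zero => simp [A]
  | succ k ih =>
    rw [mem_A_iff_even_iff_div_two_mem, pow_succ, Nat.mul_div_cancel _ two_pos]
    simp [ih]

theorem xor_two_pow_mem_A_iff (x k : ℕ) : x ^^^ 2 ^ k ∈ A ↔ x ∉ A := by
  simp [xor_mem_A_iff, two_pow_notMem_A]

theorem two_pow_factorization_two_succ_le {d : ℕ} (hd : d ≠ 0) (hA : d ∈ A) :
    2 ^ (d.factorization 2 + 1) ≤ d := by
  set k := d.factorization 2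
  set m := d / 2 ^ k
  have hdm : 2 ^ k * m = d := Nat.ordProj_mul_ordCompl_eq_self d 2
  have hm : ¬ 2 ∣ m := Nat.not_dvd_ordCompl Nat.prime_two hd
  have hm1 : m ≠ 1 := by
    rintro hm1
    rw [hm1, mul_one] at hdm
    exact two_pow_notMem_A k (hdm ▸ hA)
  have hm0 : m ≠ 0 := by rintro hm0; simp [hm0] at hm
  clear_value m
  rw [← hdm, pow_succ]
  apply Nat.mul_le_mul_left
  omega

/-- `(x ^^^ y).factorization 2` is the lowest binary digit in which `x` and `y` differ. -/
def flipLowestDiffBit (p : ℕ × ℕ) : ℕ × ℕ :=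
  (p.1 ^^^ 2 ^ (p.1 ^^^ p.2).factorization 2, p.2 ^^^ 2 ^ (p.1 ^^^ p.2).factorization 2)

theorem flipLowestDiffBit_involutive : Function.Involutive flipLowestDiffBit := by
  rintro ⟨x, y⟩
  simp [flipLowestDiffBit, Nat.xor_comm, Nat.xor_left_comm]

def reprPairs (S : Set ℕ) (n : ℕ) : Set (ℕ × ℕ) :=
  {p | p.1 ∈ S ∧ p.2 ∈ S ∧ p.1 < p.2 ∧ p.1 + p.2 = n}

theorem flipLowestDiffBit_mem_reprPairs {S T : Set ℕ} (hST : ∀ x k, x ∈ S → x ^^^ 2 ^ k ∈ T)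
    {l n : ℕ} {p : ℕ × ℕ} (hp : p ∈ reprPairs (S ∩ Iic (2 ^ l - 1)) n) (hA : p.1 ^^^ p.2 ∈ A) :
    flipLowestDiffBit p ∈ reprPairs (T ∩ Iic (2 ^ l - 1)) n := by
  obtain ⟨x, y⟩ := p
  obtain ⟨⟨hxS, hxl⟩, ⟨hyS, hyl⟩, hxy, rfl⟩ := hp
  simp only [mem_Iic, Nat.le_sub_one_iff_lt (Nat.two_pow_pos l)] at hxl hyl
  set k := (x ^^^ y).factorization 2
  have hd : x ^^^ y ≠ 0 := Nat.xor_ne_zero_iff.mpr hxy.ne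
  have hk : 2 ^ (k + 1) ≤ x ^^^ y := two_pow_factorization_two_succ_le hd hA
  have hlt : x ^^^ 2 ^ k < y ^^^ 2 ^ k := Nat.xor_two_pow_lt_xor_two_pow hxy hk
  have hkl : 2 ^ k < 2 ^ l :=
    calc 2 ^ k < 2 ^ (k + 1) := Nat.pow_lt_pow_succ one_lt_two
      _ ≤ x ^^^ y := hk
      _ < 2 ^ l := Nat.xor_lt_two_pow hxl hyl
  have hbit : x.testBit k ≠ y.testBit k := by
    simpa [Nat.testBit_xor] using Nat.testBit_factorization_two hd
  have hyl' : y ^^^ 2 ^ k < 2 ^ l := Nat.xor_lt_two_pow hyl hkl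
  exact ⟨⟨hST x k hxS, Nat.le_sub_one_of_lt (hlt.trans hyl')⟩,
    ⟨hST y k hyS, Nat.le_sub_one_of_lt hyl'⟩, hlt, Nat.xor_two_pow_add_xor_two_pow hbit⟩

theorem mapsTo_flipLowestDiffBit_Af_Bf (l n : ℕ) :
    MapsTo flipLowestDiffBit (reprPairs (Af l) n) (reprPairs (Bf l) n) := fun _ hp =>
  flipLowestDiffBit_mem_reprPairs (T := B) (fun x k hx h => (xor_two_pow_mem_A_iff x k).mp h hx)
    hp
    ((xor_mem_A_iff _ _).mpr (iff_of_true hp.1.1 hp.2.1.1))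

theorem mapsTo_flipLowestDiffBit_Bf_Af (l n : ℕ) :
    MapsTo flipLowestDiffBit (reprPairs (Bf l) n) (reprPairs (Af l) n) := fun _ hp =>
  flipLowestDiffBit_mem_reprPairs (fun x k hx => (xor_two_pow_mem_A_iff x k).mpr hx) hp
    ((xor_mem_A_iff _ _).mpr (iff_of_false hp.1.1 hp.2.1.1))

theorem repr_Af_eq_Bf_general (l n : ℕ) : R (Af l) n = R (Bf l) n :=
  have inv := flipLowestDiffBit_involutive
  (InvOn.bijOn ⟨fun p _ => inv p, fun p _ => inv p⟩ (mapsTo_flipLowestDiffBit_Af_Bf l n)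
    (mapsTo_flipLowestDiffBit_Bf_Af l n)).ncard_eq

theorem repr_Af_eq_Bf (l n : ℕ) (hn : 0 < n) : R (Af l) n = R (Bf l) n :=
  repr_Af_eq_Bf_general l n
end

section
/- For every positive integer k, R_A(k) = R_B(k), where A is the Thue–Morse set and B is its complement. -/
def Pset (S : Set ℕ) (n : ℕ) : Set (ℕ × ℕ) :=
  {p : ℕ × ℕ | p.1 ∈ S ∧ p.2 ∈ S ∧ p.1 < p.2 ∧ p.1 + p.2 = n}

lemma R_eq_s11 (S : Set ℕ) (n : ℕ) : R S n = (Pset S n).ncard := rfl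

lemma Pset_finite (S : Set ℕ) (n : ℕ) : (Pset S n).Finite := by
  apply Set.Finite.subset ((Set.finite_Iic n).prod (Set.finite_Iic n))
  rintro ⟨x, y⟩ ⟨_, _, _, h⟩
  simp only [Set.mem_prod, Set.mem_Iic]
  omega

lemma R_zero (S : Set ℕ) : R S 0 = 0 := by
  rw [R_eq_s11]
  convert Set.ncard_empty (ℕ × ℕ)
  ext ⟨x, y⟩
  simp only [Pset, Set.mem_setOf_eq, Set.mem_empty_iff_false, iff_false]
  rintro ⟨_, _, h1, h2⟩
  omega

lemma mem_B (x : ℕ) : x ∈ B ↔ x ∉ A := Iff.rfl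

lemma sum_digits_two_mul (n : ℕ) :
    ((Nat.digits 2 (2 * n)).sum) = (Nat.digits 2 n).sum := by
  rcases Nat.eq_zero_or_pos n with rfl | hn
  · simp
  · rw [Nat.digits_def' (by norm_num : 1 < 2) (by omega)]
    have h1 : (2 * n) % 2 = 0 := by omega
    have h2 : (2 * n) / 2 = n := by omega
    rw [h1, h2]
    simp

lemma sum_digits_two_mul_add_one (n : ℕ) :
    ((Nat.digits 2 (2 * n + 1)).sum) = (Nat.digits 2 n).sum + 1 := by
  rw [Nat.digits_def' (by norm_num : 1 < 2) (by omega)]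
  have h1 : (2 * n + 1) % 2 = 1 := by omega
  have h2 : (2 * n + 1) / 2 = n := by omega
  rw [h1, h2]
  simp [Nat.add_comm]

lemma A_two_mul (n : ℕ) : 2 * n ∈ A ↔ n ∈ A := by
  simp [A, sum_digits_two_mul]

lemma A_two_mul_add_one (n : ℕ) : 2 * n + 1 ∈ A ↔ n ∉ A := by
  simp only [A, Set.mem_setOf_eq, sum_digits_two_mul_add_one, Nat.even_add_one]

/-- flip the last binary digit -/
def o (x : ℕ) : ℕ := if Even x then x + 1 else x - 1

lemma o_even {x : ℕ} (h : Even x) : o x = x + 1 := if_pos h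

lemma o_odd {x : ℕ} (h : ¬ Even x) : o x = x - 1 := if_neg h

lemma o_o (x : ℕ) : o (o x) = x := by
  rcases Nat.even_or_odd x with h | h
  · have h1 : ¬ Even (x + 1) := by simp [Nat.even_add_one, h]
    rw [o_even h, o_odd h1]
    omega
  · obtain ⟨u, rfl⟩ := h
    have h0 : ¬ Even (2 * u + 1) := by simp [Nat.even_add_one]
    have h1 : Even (2 * u + 1 - 1) := ⟨u, by omega⟩
    rw [o_odd h0, o_even h1]
    omega

lemma o_inj : Function.Injective o := by
  intro a b h
  have := congrArg o h
  rwa [o_o, o_o] at this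

lemma A_o (x : ℕ) : x ∈ A ↔ o x ∉ A := by
  rcases Nat.even_or_odd x with h | h
  · obtain ⟨u, rfl⟩ := h
    have hx : u + u = 2 * u := by ring
    rw [hx, o_even (even_two_mul u), A_two_mul, A_two_mul_add_one]
    tauto
  · obtain ⟨u, rfl⟩ := h
    have h0 : ¬ Even (2 * u + 1) := by simp [Nat.even_add_one]
    have hx : 2 * u + 1 - 1 = 2 * u := by omega
    rw [o_odd h0, hx, A_two_mul, A_two_mul_add_one]

lemma image_o_sub {S : Set ℕ} (hS : ∀ x, x ∈ S ↔ o x ∉ S) {n : ℕ} (hn : Odd n) :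
    (fun p : ℕ × ℕ => (o p.1, o p.2)) '' Pset S n ⊆ Pset Sᶜ n := by
  rintro ⟨x, y⟩ ⟨⟨a, b⟩, ⟨ha, hb, hab, hsum⟩, heq⟩
  simp only [Prod.mk.injEq] at heq
  obtain ⟨rfl, rfl⟩ := heq
  have hoa : o a ∉ S := (hS a).mp ha
  have hob : o b ∉ S := (hS b).mp hb
  have hn2 : n % 2 = 1 := Nat.odd_iff.mp hn
  refine ⟨hoa, hob, ?_, ?_⟩ <;>
  · rcases Nat.even_or_odd a with h2 | h2
    · have ha2 : a % 2 = 0 := Nat.even_iff.mp h2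
      have hb2 : b % 2 = 1 := by omega
      have hbodd : ¬ Even b := by rw [Nat.even_iff]; omega
      have hne : b ≠ a + 1 := by
        intro h
        apply hoa
        rw [o_even h2, ← h]
        exact hb
      rw [o_even h2, o_odd hbodd]
      omega
    · have ha2 : a % 2 = 1 := Nat.odd_iff.mp h2
      have haodd : ¬ Even a := by rw [Nat.even_iff]; omega
      have hbe : Even b := by rw [Nat.even_iff]; omega
      rw [o_odd haodd, o_even hbe]
      omega

lemma image_o_Pset {S : Set ℕ} (hS : ∀ x, x ∈ S ↔ o x ∉ S) {n : ℕ} (hn : Odd n) :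
    (fun p : ℕ × ℕ => (o p.1, o p.2)) '' Pset S n = Pset Sᶜ n := by
  have hS' : ∀ x, x ∈ Sᶜ ↔ o x ∉ Sᶜ := by
    intro x
    simp only [Set.mem_compl_iff, not_not]
    rw [hS x]
    tauto
  apply Set.Subset.antisymm (image_o_sub hS hn)
  intro p hp
  refine ⟨(o p.1, o p.2), ?_, by simp [o_o]⟩
  have h2 := image_o_sub hS' hn ⟨p, hp, rfl⟩
  rwa [compl_compl] at h2

lemma R_compl_odd {S : Set ℕ} (hS : ∀ x, x ∈ S ↔ o x ∉ S) {n : ℕ} (hn : Odd n) :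
    R S n = R Sᶜ n := by
  rw [R_eq_s11, R_eq_s11, ← image_o_Pset hS hn]
  apply (Set.ncard_image_of_injective _ ?_).symm
  rintro ⟨a, b⟩ ⟨c, d⟩ h
  simp only [Prod.mk.injEq] at h
  exact Prod.ext (o_inj h.1) (o_inj h.2)

lemma Pset_two_mul {S S1 S2 : Set ℕ} (hE : ∀ x, 2 * x ∈ S ↔ x ∈ S1)
    (hO : ∀ x, 2 * x + 1 ∈ S ↔ x ∈ S2) (m : ℕ) :
    Pset S (2 * (m + 1)) =
      (fun p : ℕ × ℕ => (2 * p.1, 2 * p.2)) '' Pset S1 (m + 1) ∪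
      (fun p : ℕ × ℕ => (2 * p.1 + 1, 2 * p.2 + 1)) '' Pset S2 m := by
  ext ⟨x, y⟩
  simp only [Pset, Set.mem_setOf_eq, Set.mem_union, Set.mem_image, Prod.mk.injEq, Prod.exists]
  constructor
  · rintro ⟨hx, hy, hlt, hsum⟩
    rcases Nat.even_or_odd x with ⟨u, hu⟩ | ⟨u, hu⟩ <;>
      rcases Nat.even_or_odd y with ⟨v, hv⟩ | ⟨v, hv⟩
    · left
      have hxu : x = 2 * u := by omega
      have hyv : y = 2 * v := by omega
      exact ⟨u, v, ⟨(hE u).mp (hxu ▸ hx), (hE v).mp (hyv ▸ hy), by omega, by omega⟩,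
        by omega, by omega⟩
    · exfalso; omega
    · exfalso; omega
    · right
      exact ⟨u, v, ⟨(hO u).mp (hu ▸ hx), (hO v).mp (hv ▸ hy), by omega, by omega⟩,
        by omega, by omega⟩
  · rintro (⟨u, v, ⟨h1, h2, h3, h4⟩, rfl, rfl⟩ | ⟨u, v, ⟨h1, h2, h3, h4⟩, rfl, rfl⟩)
    · exact ⟨(hE u).mpr h1, (hE v).mpr h2, by omega, by omega⟩
    · exact ⟨(hO u).mpr h1, (hO v).mpr h2, by omega, by omega⟩

lemma R_two_mul {S S1 S2 : Set ℕ} (hE : ∀ x, 2 * x ∈ S ↔ x ∈ S1)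
    (hO : ∀ x, 2 * x + 1 ∈ S ↔ x ∈ S2) (m : ℕ) :
    R S (2 * (m + 1)) = R S1 (m + 1) + R S2 m := by
  have inj1 : Function.Injective (fun p : ℕ × ℕ => (2 * p.1, 2 * p.2)) := by
    rintro ⟨a, b⟩ ⟨c, d⟩ h
    simp only [Prod.mk.injEq] at h ⊢
    omega
  have inj2 : Function.Injective (fun p : ℕ × ℕ => (2 * p.1 + 1, 2 * p.2 + 1)) := by
    rintro ⟨a, b⟩ ⟨c, d⟩ h
    simp only [Prod.mk.injEq] at h ⊢
    omega
  have hdisj : Disjoint ((fun p : ℕ × ℕ => (2 * p.1, 2 * p.2)) '' Pset S1 (m + 1))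
      ((fun p : ℕ × ℕ => (2 * p.1 + 1, 2 * p.2 + 1)) '' Pset S2 m) := by
    rw [Set.disjoint_left]
    rintro p ⟨⟨a, b⟩, _, rfl⟩ ⟨⟨c, d⟩, _, heq⟩
    simp only [Prod.mk.injEq] at heq
    omega
  rw [R_eq_s11, R_eq_s11, R_eq_s11, Pset_two_mul hE hO,
    Set.ncard_union_eq hdisj ((Pset_finite S1 (m + 1)).image _) ((Pset_finite S2 m).image _),
    Set.ncard_image_of_injective _ inj1, Set.ncard_image_of_injective _ inj2]

lemma B_two_mul (n : ℕ) : 2 * n ∈ B ↔ n ∈ B := by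
  rw [mem_B, mem_B, A_two_mul]

lemma B_two_mul_add_one (n : ℕ) : 2 * n + 1 ∈ B ↔ n ∈ A := by
  rw [mem_B, A_two_mul_add_one]
  tauto

lemma A_two_mul_add_one' (n : ℕ) : 2 * n + 1 ∈ A ↔ n ∈ B := A_two_mul_add_one n

theorem repr_A_eq_B (k : ℕ) (hk : 0 < k) : R A k = R B k := by
  induction k using Nat.strong_induction_on with
  | _ k ih =>
    rcases Nat.even_or_odd k with hk2 | hk2
    · obtain ⟨m, rfl⟩ := hk2
      obtain ⟨j, rfl⟩ := Nat.exists_eq_succ_of_ne_zero (show m ≠ 0 by omega)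
      have hrw : (j + 1) + (j + 1) = 2 * (j + 1) := by ring
      rw [hrw, R_two_mul A_two_mul A_two_mul_add_one' j,
        R_two_mul B_two_mul B_two_mul_add_one j]
      have h1 : R A (j + 1) = R B (j + 1) := ih (j + 1) (by omega) (by omega)
      have h2 : R B j = R A j := by
        rcases Nat.eq_zero_or_pos j with rfl | hj
        · rw [R_zero, R_zero]
        · exact (ih j (by omega) hj).symm
      omega
    · show R A k = R Aᶜ k
      exact R_compl_odd A_o hk2
end

section
/- For every natural number l and every positive integer n, R_{A_{l+1}}(n) = R_{A_l}(n) + |{(a, a') : a ∈ A_l, a' ∈ B_l, a + a' = n − 2^l}| + R_{B_l}(n − 2^{l+1}), and R_{B_{l+1}}(n) = R_{B_l}(n) + |{(a, a') : a ∈ B_l, a' ∈ A_l, a + a' = n − 2^l}| + R_{A_l}(n − 2^{l+1}) (where terms with a negative argument are taken to be 0). -/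
/-! Writing `2 ^ l + b` with `b < 2 ^ l` in binary prepends a single `1` to the digits of `b`,
so `A_{l+1} = A_l ∪ (2 ^ l + B_l)` and `B_{l+1} = B_l ∪ (2 ^ l + A_l)`, every element of the
translated part exceeding every element of the old one. Hence a pair `s < s'` from `X ∪ (c + Y)`
with `X ⊆ [0, c)` lies in `X`, or has `s ∈ X` and `s' ∈ c + Y`, or lies in `c + Y`; translating
back gives the three terms. -/

lemma digits_sum_add_pow_mul {b l m n : ℕ} (hb : 1 < b) (hn : n < b ^ l) :
    (Nat.digits b (n + b ^ l * m)).sum = (Nat.digits b n).sum + (Nat.digits b m).sum := by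
  rcases Nat.eq_zero_or_pos m with rfl | hm
  · simp
  have hlen : (Nat.digits b n).length ≤ l := (Nat.digits_length_le_iff hb n).mpr hn
  rw [← Nat.add_sub_cancel' hlen, ← Nat.digits_append_zeroes_append_digits hb hm]
  simp

lemma two_pow_add_mem_A_iff {l b : ℕ} (hb : b < 2 ^ l) : 2 ^ l + b ∈ A ↔ b ∈ B := by
  have h : (Nat.digits 2 (2 ^ l + b)).sum = (Nat.digits 2 b).sum + 1 := by
    simpa [add_comm] using digits_sum_add_pow_mul (m := 1) one_lt_two hb
  simp only [A, B, Set.mem_compl_iff, Set.mem_ofPred_eq, h, Nat.even_add_one]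

lemma two_pow_add_mem_B_iff {l b : ℕ} (hb : b < 2 ^ l) : 2 ^ l + b ∈ B ↔ b ∈ A := by
  rw [B, Set.mem_compl_iff, two_pow_add_mem_A_iff hb, B, Set.mem_compl_iff, not_not]

lemma Iic_two_pow_sub_one (k : ℕ) : Set.Iic (2 ^ k - 1) = Set.Iio (2 ^ k) := by
  ext m
  simp [Nat.le_sub_one_iff_lt (Nat.two_pow_pos k)]

lemma inter_Iio_add_self {S T : Set ℕ} {c : ℕ} (h : ∀ b < c, c + b ∈ S ↔ b ∈ T) :
    S ∩ Set.Iio (c + c) = S ∩ Set.Iio c ∪ (c + ·) '' (T ∩ Set.Iio c) := by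
  ext m
  simp only [Set.mem_inter_iff, Set.mem_union, Set.mem_image, Set.mem_Iio]
  constructor
  · rintro ⟨hS, hm⟩
    rcases lt_or_ge m c with hlt | hge
    · exact Or.inl ⟨hS, hlt⟩
    · obtain ⟨b, rfl⟩ := Nat.exists_eq_add_of_le hge
      exact Or.inr ⟨b, ⟨(h b (by omega)).mp hS, by omega⟩, rfl⟩
  · rintro (⟨hS, hm⟩ | ⟨b, ⟨hT, hb⟩, rfl⟩)
    · exact ⟨hS, by omega⟩
    · exact ⟨(h b hb).mpr hT, by omega⟩

lemma Af_subset_Iio (l : ℕ) : Af l ⊆ Set.Iio (2 ^ l) := by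
  rw [Af, Iic_two_pow_sub_one]
  exact Set.inter_subset_right

lemma Bf_subset_Iio (l : ℕ) : Bf l ⊆ Set.Iio (2 ^ l) := by
  rw [Bf, Iic_two_pow_sub_one]
  exact Set.inter_subset_right

lemma Af_succ (l : ℕ) : Af (l + 1) = Af l ∪ (2 ^ l + ·) '' Bf l := by
  simp only [Af, Bf, Iic_two_pow_sub_one]
  rw [pow_succ, mul_two]
  exact inter_Iio_add_self fun _ => two_pow_add_mem_A_iff

lemma Bf_succ (l : ℕ) : Bf (l + 1) = Bf l ∪ (2 ^ l + ·) '' Af l := by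
  simp only [Af, Bf, Iic_two_pow_sub_one]
  rw [pow_succ, mul_two]
  exact inter_Iio_add_self fun _ => two_pow_add_mem_B_iff

open Finset in
lemma finite_of_forall_add_eq {T : Set (ℕ × ℕ)} {n : ℕ} (h : ∀ p ∈ T, p.1 + p.2 = n) :
    T.Finite :=
  (antidiagonal n).finite_toSet.subset fun p hp => mem_antidiagonal.mpr (h p hp)

lemma R_union_of_forall_lt {X Z : Set ℕ} (hXZ : ∀ x ∈ X, ∀ z ∈ Z, x < z) (n : ℕ) :
    R (X ∪ Z) n =
      R X n + {p : ℕ × ℕ | p.1 ∈ X ∧ p.2 ∈ Z ∧ p.1 + p.2 = n}.ncard + R Z n := by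
  unfold R
  set S₁ : Set (ℕ × ℕ) := {p | p.1 ∈ X ∧ p.2 ∈ X ∧ p.1 < p.2 ∧ p.1 + p.2 = n}
  set S₂ : Set (ℕ × ℕ) := {p | p.1 ∈ X ∧ p.2 ∈ Z ∧ p.1 + p.2 = n}
  set S₃ : Set (ℕ × ℕ) := {p | p.1 ∈ Z ∧ p.2 ∈ Z ∧ p.1 < p.2 ∧ p.1 + p.2 = n}
  have hsplit : {p : ℕ × ℕ | p.1 ∈ X ∪ Z ∧ p.2 ∈ X ∪ Z ∧ p.1 < p.2 ∧ p.1 + p.2 = n} =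
      S₁ ∪ S₂ ∪ S₃ := by
    ext ⟨a, b⟩
    have := hXZ a
    have := hXZ b
    simp only [S₁, S₂, S₃, Set.mem_union, Set.mem_ofPred_eq]
    grind
  have hdisj : Disjoint X Z := Set.disjoint_left.mpr fun x hx hz => (hXZ x hx x hz).false
  have h₁₂ : Disjoint S₁ S₂ :=
    Set.disjoint_left.mpr fun _ h₁ h₂ => hdisj.notMem_of_mem_left h₁.2.1 h₂.2.1
  have h₁₂₃ : Disjoint (S₁ ∪ S₂) S₃ := Set.disjoint_union_left.mpr
    ⟨Set.disjoint_left.mpr fun _ h₁ h₃ => hdisj.notMem_of_mem_left h₁.1 h₃.1,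
      Set.disjoint_left.mpr fun _ h₂ h₃ => hdisj.notMem_of_mem_left h₂.1 h₃.1⟩
  have hS₁ : S₁.Finite := finite_of_forall_add_eq fun _ hp => hp.2.2.2
  have hS₂ : S₂.Finite := finite_of_forall_add_eq fun _ hp => hp.2.2
  have hS₃ : S₃.Finite := finite_of_forall_add_eq fun _ hp => hp.2.2.2
  rw [hsplit, Set.ncard_union_eq h₁₂₃ (hS₁.union hS₂) hS₃, Set.ncard_union_eq h₁₂ hS₁ hS₂]

lemma ncard_mem_image_add_right (X Y : Set ℕ) (c n : ℕ) :
    {p : ℕ × ℕ | p.1 ∈ X ∧ p.2 ∈ (c + ·) '' Y ∧ p.1 + p.2 = n}.ncard =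
      {p : ℕ × ℕ | p.1 ∈ X ∧ p.2 ∈ Y ∧ c + (p.1 + p.2) = n}.ncard := by
  symm
  rw [← Set.ncard_image_of_injective _ (Prod.map_injective.mpr
    ⟨Function.injective_id, add_right_injective c⟩)]
  congr 1
  ext ⟨a, b⟩
  simp only [Set.mem_image, Set.mem_ofPred_eq, Prod.exists, Prod.map_apply, id, Prod.mk.injEq]
  grind

lemma R_image_add (Y : Set ℕ) (c n : ℕ) :
    R ((c + ·) '' Y) n =
      {p : ℕ × ℕ | p.1 ∈ Y ∧ p.2 ∈ Y ∧ p.1 < p.2 ∧ c + c + (p.1 + p.2) = n}.ncard := by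
  rw [R, eq_comm, ← Set.ncard_image_of_injective _ (Prod.map_injective.mpr
    ⟨add_right_injective c, add_right_injective c⟩)]
  congr 1
  ext ⟨a, b⟩
  simp only [Set.mem_image, Set.mem_ofPred_eq, Prod.exists, Prod.map_apply, Prod.mk.injEq]
  grind

lemma R_union_image_add {X : Set ℕ} {c : ℕ} (hX : X ⊆ Set.Iio c) (Y : Set ℕ) (n : ℕ) :
    R (X ∪ (c + ·) '' Y) n =
      R X n + {p : ℕ × ℕ | p.1 ∈ X ∧ p.2 ∈ Y ∧ c + (p.1 + p.2) = n}.ncard +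
        {p : ℕ × ℕ | p.1 ∈ Y ∧ p.2 ∈ Y ∧ p.1 < p.2 ∧ c + c + (p.1 + p.2) = n}.ncard := by
  rw [R_union_of_forall_lt, ncard_mem_image_add_right, R_image_add]
  rintro x hx _ ⟨y, -, rfl⟩
  exact (hX hx).trans_le (Nat.le_add_right c y)

theorem repr_recursion_general (l n : ℕ) :
    R (Af (l + 1)) n =
      R (Af l) n +
        {p : ℕ × ℕ | p.1 ∈ Af l ∧ p.2 ∈ Bf l ∧ 2 ^ l + (p.1 + p.2) = n}.ncard +
        {p : ℕ × ℕ | p.1 ∈ Bf l ∧ p.2 ∈ Bf l ∧ p.1 < p.2 ∧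
          2 ^ (l + 1) + (p.1 + p.2) = n}.ncard ∧
    R (Bf (l + 1)) n =
      R (Bf l) n +
        {p : ℕ × ℕ | p.1 ∈ Bf l ∧ p.2 ∈ Af l ∧ 2 ^ l + (p.1 + p.2) = n}.ncard +
        {p : ℕ × ℕ | p.1 ∈ Af l ∧ p.2 ∈ Af l ∧ p.1 < p.2 ∧
          2 ^ (l + 1) + (p.1 + p.2) = n}.ncard := by
  rw [Af_succ, Bf_succ, pow_succ, mul_two]
  exact ⟨R_union_image_add (Af_subset_Iio l) (Bf l) n,
    R_union_image_add (Bf_subset_Iio l) (Af l) n⟩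

theorem repr_recursion (l n : ℕ) (hn : 0 < n) :
    R (Af (l + 1)) n =
      R (Af l) n +
        {p : ℕ × ℕ | p.1 ∈ Af l ∧ p.2 ∈ Bf l ∧ 2 ^ l + (p.1 + p.2) = n}.ncard +
        {p : ℕ × ℕ | p.1 ∈ Bf l ∧ p.2 ∈ Bf l ∧ p.1 < p.2 ∧
          2 ^ (l + 1) + (p.1 + p.2) = n}.ncard ∧
    R (Bf (l + 1)) n =
      R (Bf l) n +
        {p : ℕ × ℕ | p.1 ∈ Bf l ∧ p.2 ∈ Af l ∧ 2 ^ l + (p.1 + p.2) = n}.ncard +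
        {p : ℕ × ℕ | p.1 ∈ Af l ∧ p.2 ∈ Af l ∧ p.1 < p.2 ∧
          2 ^ (l + 1) + (p.1 + p.2) = n}.ncard :=
  repr_recursion_general l n
end
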